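/- Let C > 0 and let a, b > 1 with θ := log a satisfying θ ≥ 1 and θ · e^{−θ} ≤ 1/(12 C), and with li(b) = li(a) + C. Let y ≥ θ and set y′ = y + C · y · e^{−y}. Then y′ − log b ≥ (y − θ)/2 ≥ 0. -/

import Mathlib

/-!
Since `li' t = 1 / log t`, the map `u ↦ li (exp u)` has derivative `exp u / u`, which is
increasing for `u ≥ 1`. Hence `li (exp B) - li a ≥ (a / θ) (B - θ)`, and for `B = θ + C θ e^{-θ}`
the right side is exactly `C`, so `log b ≤ B`: one Euler step from `θ` overshoots the exact flow.
Writing `h = y - θ`, the elementary bound `e^{-h} ≥ 1 - h` gives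
`(y + C y e^{-y}) - B ≥ h (1 + C e^{-y} - C θ e^{-θ})`, and `C θ e^{-θ} ≤ 1/12` makes the
factor at least `1/2`.
-/

noncomputable def li (t : ℝ) : ℝ := ∫ τ in (2:ℝ)..t, 1 / Real.log τ

open Real Set

noncomputable def eulerStep (C y : ℝ) : ℝ := y + C * y * exp (-y)

lemma continuousOn_one_div_log : ContinuousOn (fun τ : ℝ => 1 / log τ) (Ioi 1) :=
  continuousOn_const.div (continuousOn_log.mono fun _ hx => (one_pos.trans hx).ne')
    fun _ hx => (log_pos hx).ne'

lemma li_hasDerivAt {t : ℝ} (ht : 1 < t) : HasDerivAt li (1 / log t) t := by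
  have huIcc : uIcc 2 t ⊆ Ioi 1 := fun x hx =>
    lt_of_lt_of_le (lt_min one_lt_two ht) hx.1
  exact intervalIntegral.integral_hasDerivAt_right
    ((continuousOn_one_div_log.mono huIcc).intervalIntegrable)
    (continuousOn_one_div_log.stronglyMeasurableAtFilter isOpen_Ioi _ ht)
    (continuousOn_one_div_log.continuousAt (Ioi_mem_nhds ht))

lemma li_strictMonoOn : StrictMonoOn li (Ioi 1) :=
  strictMonoOn_of_hasDerivWithinAt_pos (convex_Ioi 1)
    (fun _ hx => (li_hasDerivAt hx).continuousAt.continuousWithinAt)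
    (fun _ hx => (li_hasDerivAt (by simpa using hx)).hasDerivWithinAt)
    fun _ hx => one_div_pos.2 (log_pos (by simpa using hx))

lemma hasDerivAt_li_exp {s : ℝ} (hs : 0 < s) :
    HasDerivAt (fun u => li (exp u)) (exp s / s) s := by
  have h := (li_hasDerivAt (one_lt_exp_iff.2 hs)).comp s (hasDerivAt_exp s)
  rw [log_exp] at h
  exact h.congr_deriv (one_div_mul_eq_div s (exp s))

lemma exp_div_self_le_exp_div_self {θ s : ℝ} (hθ : 1 ≤ θ) (hs : θ ≤ s) :
    exp θ / θ ≤ exp s / s := by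
  have hθ₀ : 0 < θ := one_pos.trans_le hθ
  rw [div_le_div_iff₀ hθ₀ (hθ₀.trans_le hs)]
  have hexp : exp θ * (s - θ + 1) ≤ exp s := by
    calc exp θ * (s - θ + 1) ≤ exp θ * exp (s - θ) :=
          mul_le_mul_of_nonneg_left (add_one_le_exp _) (exp_pos θ).le
      _ = exp s := by rw [← exp_add, add_sub_cancel]
  nlinarith [mul_nonneg (exp_pos θ).le (mul_nonneg (sub_nonneg.2 hθ) (sub_nonneg.2 hs))]

lemma mul_sub_le_li_exp_sub_li_exp {θ B : ℝ} (hθ : 1 ≤ θ) (hB : θ ≤ B) :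
    exp θ / θ * (B - θ) ≤ li (exp B) - li (exp θ) := by
  have hderiv : ∀ s ∈ Icc θ B, HasDerivAt (fun u => li (exp u)) (exp s / s) s :=
    fun s hs => hasDerivAt_li_exp (one_pos.trans_le (hθ.trans hs.1))
  refine (convex_Icc θ B).mul_sub_le_image_sub_of_le_deriv
    (fun s hs => (hderiv s hs).continuousAt.continuousWithinAt)
    (fun s hs => (hderiv s (interior_subset hs)).differentiableAt.differentiableWithinAt)
    (fun s hs => ?_) θ (left_mem_Icc.2 hB) B (right_mem_Icc.2 hB) hB
  rw [(hderiv s (interior_subset hs)).deriv]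
  exact exp_div_self_le_exp_div_self hθ (interior_subset hs).1

lemma log_le_eulerStep_of_li_eq {C θ b : ℝ} (hC : 0 ≤ C) (hθ : 1 ≤ θ) (hb : 1 < b)
    (hli : li b = li (exp θ) + C) : log b ≤ eulerStep C θ := by
  have hθ₀ : 0 < θ := one_pos.trans_le hθ
  have hstep : θ ≤ eulerStep C θ := le_add_of_nonneg_right (by positivity)
  have hgain : exp θ / θ * (eulerStep C θ - θ) = C := by
    rw [eulerStep, add_sub_cancel_left, exp_neg]
    field_simp
  have hli_le : li b ≤ li (exp (eulerStep C θ)) := by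
    linarith [mul_sub_le_li_exp_sub_li_exp hθ hstep]
  rw [log_le_iff_le_exp (one_pos.trans hb)]
  exact (li_strictMonoOn.le_iff_le hb (one_lt_exp_iff.2 (hθ₀.trans_le hstep))).1 hli_le

lemma sub_mul_le_eulerStep_sub_eulerStep {C θ y : ℝ} (hC : 0 ≤ C) (hθ : 0 ≤ θ) :
    (y - θ) * (1 + C * exp (-y) - C * θ * exp (-θ)) ≤ eulerStep C y - eulerStep C θ := by
  have hsplit : exp (-y) = exp (-θ) * exp (-(y - θ)) := by rw [← exp_add]; ring_nf
  -- the gap is `C θ e^{-θ} (e^{-h} - 1 + h)` with `h = y - θ`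
  have hgap : 0 ≤ C * θ * exp (-θ) * (exp (-(y - θ)) - 1 + (y - θ)) := by
    have := add_one_le_exp (-(y - θ))
    exact mul_nonneg (by positivity) (by linarith)
  rw [eulerStep, eulerStep, hsplit]
  linarith

/-- Single induction step in the lower-bound analysis of the Euler scheme
`σ_{k+1} = σ_k (1 + C e^{−σ_k})` for the ODE `f' = C f e^{−f}`:
with `θ = log a`, `li b = li a + C` and `y ≥ θ`, setting `y' = y + C y e^{−y}`
one has `y' − log b ≥ (y − θ)/2 ≥ 0`. -/
theorem euler_step_lower_bound
    (C a b y : ℝ) (hC : 0 < C) (ha : 1 < a) (hb : 1 < b)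
    (hθ1 : 1 ≤ Real.log a)
    (hθ2 : Real.log a * Real.exp (-(Real.log a)) ≤ 1 / (12 * C))
    (hli : li b = li a + C)
    (hy : Real.log a ≤ y) :
    (y - Real.log a) / 2 ≤ y + C * y * Real.exp (-y) - Real.log b ∧
      0 ≤ (y - Real.log a) / 2 := by
  have hlogb : log b ≤ eulerStep C (log a) :=
    log_le_eulerStep_of_li_eq hC.le hθ1 hb (by rwa [exp_log (one_pos.trans ha)])
  have hsmall : C * log a * exp (-log a) ≤ 1 / 12 := by
    calc C * log a * exp (-log a) ≤ C * (1 / (12 * C)) := by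
          rw [mul_assoc]; exact mul_le_mul_of_nonneg_left hθ2 hC.le
      _ = 1 / 12 := by field_simp
  have hfactor : 1 / 2 ≤ 1 + C * exp (-y) - C * log a * exp (-log a) := by
    linarith [mul_pos hC (exp_pos (-y))]
  have hh : 0 ≤ y - log a := sub_nonneg.2 hy
  refine ⟨?_, by linarith⟩
  calc (y - log a) / 2 ≤ (y - log a) * (1 + C * exp (-y) - C * log a * exp (-log a)) := by
        rw [div_eq_mul_one_div]; exact mul_le_mul_of_nonneg_left hfactor hh
    _ ≤ eulerStep C y - eulerStep C (log a) :=
        sub_mul_le_eulerStep_sub_eulerStep hC.le (zero_le_one.trans hθ1)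
    _ ≤ eulerStep C y - log b := sub_le_sub_left hlogb _
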